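/- Let A₁, ..., Aₘ be real symmetric n×n matrices, and suppose there exists λ ∈ ℝᵐ with λₘ ≠ 0 such that λ₁A₁ + ... + λₘAₘ is positive definite. Let P be any invertible real matrix with Pᵀ(λ₁A₁ + ... + λₘAₘ)P = I. Then A₁, ..., Aₘ are simultaneously diagonalizable via congruence if and only if the matrices PᵀAᵢP, i = 1, ..., m−1, pairwise commute. -/

import Mathlib

/-!
Put `Bᵢ = Pᵀ Aᵢ P`, so that `∑ λᵢ Bᵢ = 1`. Congruence by the invertible `P` does not change
simultaneous diagonalizability, so it suffices to treat the `Bᵢ`.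

If `Qᵀ Bᵢ Q = Dᵢ` are diagonal, then `QᵀQ = ∑ λᵢ Dᵢ` is diagonal too, and conjugating by `Qᵀ`
turns each `Bᵢ` into the diagonal matrix `Dᵢ (QᵀQ)⁻¹`; hence the `Bᵢ` commute.

Conversely, since `λₘ ≠ 0`, `Bₘ` is a linear combination of `1, B₁, …, Bₘ₋₁`, so it commutes
with them as soon as they commute with each other. A commuting family of symmetric matrices has
an orthonormal basis of common eigenvectors, i.e. it is simultaneously diagonalized by an
orthogonal matrix.
-/

open Module

theorem LinearMap.IsSymmetric.exists_orthonormalBasis_forall_apply_eq_smul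
    {𝕜 E ι κ : Type*} [RCLike 𝕜] [NormedAddCommGroup E] [InnerProductSpace 𝕜 E]
    [FiniteDimensional 𝕜 E] [Fintype κ] {T : ι → E →ₗ[𝕜] E} (hT : ∀ i, (T i).IsSymmetric)
    (hC : Pairwise (Function.onFun Commute T)) (hκ : finrank 𝕜 E = Fintype.card κ) :
    ∃ b : OrthonormalBasis κ 𝕜 E, ∀ a, ∃ χ : ι → 𝕜, ∀ i, T i (b a) = χ i • b a := by
  classical
  let W (χ : ι → 𝕜) := ⨅ i, Module.End.eigenspace (T i) (χ i)
  have hW : DirectSum.IsInternal W :=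
    _root_.LinearMap.IsSymmetric.directSum_isInternal_of_pairwise_commute hT hC
  -- `subordinateOrthonormalBasis` needs a finite index set: keep only the nonzero `W χ`
  let _ := hW.submodule_iSupIndep.fintypeNeBotOfFiniteDimensional
  have hW' := DirectSum.isInternal_ne_bot_iff.mpr hW
  have hO := (orthogonalFamily_iInf_eigenspaces hT).comp
    (Subtype.val_injective (p := fun χ => W χ ≠ ⊥))
  refine ⟨(hW'.subordinateOrthonormalBasis hκ hO).reindex (Fintype.equivFin κ).symm,
    fun a => ⟨(hW'.subordinateOrthonormalBasisIndex hκ (Fintype.equivFin κ a) hO).1,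
      fun i => ?_⟩⟩
  have hmem := hW'.subordinateOrthonormalBasis_subordinate hκ (Fintype.equivFin κ a) hO
  simpa using Module.End.mem_eigenspace_iff.mp ((Submodule.mem_iInf _).mp hmem i)

theorem commute_of_sum_smul_eq_one {K A ι : Type*} [Field K] [Ring A] [Algebra K A]
    [Fintype ι] [DecidableEq ι] {B : ι → A} {c : ι → K} {k : ι} (hsum : ∑ i, c i • B i = 1)
    (hk : c k ≠ 0) (hB : ∀ i j, i ≠ k → j ≠ k → Commute (B i) (B j)) (i j : ι) :
    Commute (B i) (B j) := by
  have hk_comm : ∀ i, i ≠ k → Commute (B i) (B k) := by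
    intro i hi
    have hBk : c k • B k = 1 - ∑ j ∈ Finset.univ.erase k, c j • B j := by
      rw [← hsum, ← Finset.add_sum_erase _ _ (Finset.mem_univ k), add_sub_cancel_right]
    rw [← Commute.smul_right_iff₀ hk, hBk]
    exact (Commute.one_right _).sub_right <| Commute.sum_right _ _ _ fun j hj =>
      (hB i j hi (Finset.ne_of_mem_erase hj)).smul_right _
  by_cases hi : i = k <;> by_cases hj : j = k
  · subst hi hj; exact Commute.refl _
  · subst hi; exact (hk_comm j hj).symm
  · subst hj; exact hk_comm i hi
  · exact hB i j hi hj

namespace Matrix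

theorem exists_mem_unitaryGroup_forall_isDiag {𝕜 n ι : Type*} [RCLike 𝕜] [Fintype n]
    [DecidableEq n] {B : ι → Matrix n n 𝕜} (hB : ∀ i, (B i).IsHermitian)
    (hC : ∀ i j, Commute (B i) (B j)) :
    ∃ U ∈ unitaryGroup n 𝕜, ∀ i, (star U * B i * U).IsDiag := by
  obtain ⟨b, hb⟩ := LinearMap.IsSymmetric.exists_orthonormalBasis_forall_apply_eq_smul
    (T := fun i => toEuclideanLin (B i)) (fun i => isSymmetric_toEuclideanLin_iff.mpr (hB i))
    (fun i j _ => (hC i j).map (toLpLinAlgEquiv 2)) finrank_euclideanSpace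
  choose χ hχ using hb
  set U := (EuclideanSpace.basisFun n 𝕜).toBasis.toMatrix b.toBasis
  have hU : U ∈ unitaryGroup n 𝕜 :=
    (EuclideanSpace.basisFun n 𝕜).toMatrix_orthonormalBasis_mem_unitary b
  refine ⟨U, hU, fun i => ?_⟩
  have hBU : B i * U = U * diagonal (fun a => χ a i) := by
    have hUapply : ∀ r a, U r a = b a r := fun _ _ => rfl
    ext r a
    rw [mul_diagonal]
    simpa [mul_apply, hUapply, mulVec, dotProduct, mul_comm]
      using congr(WithLp.ofLp $(hχ a i) r)
  rw [mul_assoc, hBU, ← mul_assoc, hU.1, one_mul]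
  exact isDiag_diagonal _

theorem IsSymm.transpose_mul_mul {n m α : Type*} [Fintype n] [CommSemiring α]
    {A : Matrix n n α} (hA : A.IsSymm) (P : Matrix n m α) : (Pᵀ * A * P).IsSymm := by
  simp [IsSymm, transpose_mul, hA.eq, Matrix.mul_assoc]

variable {n α : Type*} [Fintype n] [DecidableEq n]

theorem IsDiag.mul [NonUnitalNonAssocSemiring α] {A B : Matrix n n α} (hA : A.IsDiag)
    (hB : B.IsDiag) : (A * B).IsDiag := by
  rw [← hA.diagonal_diag, ← hB.diagonal_diag, diagonal_mul_diagonal]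
  exact isDiag_diagonal _

theorem IsDiag.commute [NonUnitalNonAssocCommSemiring α] {A B : Matrix n n α} (hA : A.IsDiag)
    (hB : B.IsDiag) : Commute A B := by
  rw [← hA.diagonal_diag, ← hB.diagonal_diag]
  exact commute_diagonal _ _

theorem IsDiag.inv [CommRing α] {A : Matrix n n α} (hA : A.IsDiag) : A⁻¹.IsDiag := by
  rw [← hA.diagonal_diag, inv_diagonal]
  exact isDiag_diagonal _

theorem commute_of_isDiag_conj [CommRing α] {X B C : Matrix n n α} (hX : IsUnit X)
    (hB : (X * B * X⁻¹).IsDiag) (hC : (X * C * X⁻¹).IsDiag) : Commute B C := by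
  have hXdet : IsUnit X.det := (isUnit_iff_isUnit_det X).mp hX
  have hconj : X * (B * C) * X⁻¹ = X * (C * B) * X⁻¹ := by
    simpa [Matrix.mul_assoc, nonsing_inv_mul_cancel_left _ _ hXdet] using (hB.commute hC).eq
  rw [commute_iff_eq]
  simpa [Matrix.mul_assoc, nonsing_inv_mul_cancel_left _ _ hXdet, nonsing_inv_mul _ hXdet]
    using congr(X⁻¹ * $hconj * X)

theorem isDiag_transpose_mul_mul_transpose_inv [CommRing α] {R B : Matrix n n α}
    (hR : IsUnit R) (hRR : (Rᵀ * R).IsDiag) (hB : (Rᵀ * B * R).IsDiag) :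
    (Rᵀ * B * Rᵀ⁻¹).IsDiag := by
  have hRdet : IsUnit R.det := (isUnit_iff_isUnit_det R).mp hR
  have hfactor : Rᵀ * B * Rᵀ⁻¹ = Rᵀ * B * R * (Rᵀ * R)⁻¹ := by
    rw [Matrix.mul_inv_rev, ← Matrix.mul_assoc, Matrix.mul_assoc _ R, mul_nonsing_inv _ hRdet,
      Matrix.mul_one]
  rw [hfactor]
  exact hB.mul hRR.inv

def SimultaneouslyDiagonalizableByCongruence {ι R : Type*} [CommSemiring R]
    (A : ι → Matrix n n R) : Prop :=
  ∃ Q : Matrix n n R, IsUnit Q ∧ ∀ i, (Qᵀ * A i * Q).IsDiag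

namespace SimultaneouslyDiagonalizableByCongruence

variable {ι R : Type*}

theorem of_transpose_mul_mul [CommSemiring R] {A : ι → Matrix n n R} {P : Matrix n n R}
    (hP : IsUnit P) (h : SimultaneouslyDiagonalizableByCongruence fun i => Pᵀ * A i * P) :
    SimultaneouslyDiagonalizableByCongruence A := by
  obtain ⟨Q, hQ, hdiag⟩ := h
  refine ⟨P * Q, hP.mul hQ, fun i => ?_⟩
  simpa [transpose_mul, Matrix.mul_assoc] using hdiag i

theorem transpose_mul_mul_iff [CommRing R] {A : ι → Matrix n n R} {P : Matrix n n R}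
    (hP : IsUnit P) :
    SimultaneouslyDiagonalizableByCongruence (fun i => Pᵀ * A i * P) ↔
      SimultaneouslyDiagonalizableByCongruence A := by
  refine ⟨of_transpose_mul_mul hP,
    fun h => of_transpose_mul_mul (isUnit_nonsing_inv_iff.mpr hP) ?_⟩
  have hPdet : IsUnit P.det := (isUnit_iff_isUnit_det P).mp hP
  have hcancel : ∀ i, P⁻¹ᵀ * (Pᵀ * A i * P) * P⁻¹ = A i := fun i => by
    simp [transpose_nonsing_inv, Matrix.mul_assoc, mul_nonsing_inv _ hPdet,
      nonsing_inv_mul_cancel_left _ _ (show IsUnit Pᵀ.det by simpa using hPdet)]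
  simpa only [hcancel] using h

theorem commute_of_sum_smul_eq_one [CommRing R] [Fintype ι] {B : ι → Matrix n n R}
    {c : ι → R} (h : SimultaneouslyDiagonalizableByCongruence B) (hsum : ∑ i, c i • B i = 1)
    (i j : ι) : Commute (B i) (B j) := by
  obtain ⟨Q, hQ, hdiag⟩ := h
  have hQQ : (Qᵀ * Q).IsDiag := by
    have hQQ_sum : Qᵀ * Q = ∑ i, c i • (Qᵀ * B i * Q) := calc
      Qᵀ * Q = Qᵀ * (∑ i, c i • B i) * Q := by rw [hsum, Matrix.mul_one]
      _ = ∑ i, c i • (Qᵀ * B i * Q) := by simp [Finset.mul_sum, Finset.sum_mul]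
    intro k l hkl
    simp [hQQ_sum, Matrix.sum_apply, hdiag _ hkl]
  exact commute_of_isDiag_conj ((isUnit_transpose Q).mpr hQ)
    (isDiag_transpose_mul_mul_transpose_inv hQ hQQ (hdiag i))
    (isDiag_transpose_mul_mul_transpose_inv hQ hQQ (hdiag j))

end SimultaneouslyDiagonalizableByCongruence

theorem simultaneouslyDiagonalizableByCongruence_of_commute {ι : Type*}
    {B : ι → Matrix n n ℝ} (hB : ∀ i, (B i).IsSymm) (hC : ∀ i j, Commute (B i) (B j)) :
    SimultaneouslyDiagonalizableByCongruence B := by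
  obtain ⟨U, hU, hdiag⟩ :=
    exists_mem_unitaryGroup_forall_isDiag (fun i => isHermitian_iff_isSymm.mpr (hB i)) hC
  exact ⟨U, Unitary.isUnit_coe (U := ⟨U, hU⟩), by simpa [star_eq_conjTranspose] using hdiag⟩

end Matrix

open Matrix

theorem stmt_10_general (n m : ℕ) (A : Fin (m + 1) → Matrix (Fin n) (Fin n) ℝ)
    (hA : ∀ i, (A i).IsSymm)
    (lam : Fin (m + 1) → ℝ) (hlamm : lam (Fin.last m) ≠ 0)
    (P : Matrix (Fin n) (Fin n) ℝ) (hP : IsUnit P)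
    (hPid : Pᵀ * (∑ i, lam i • A i) * P = 1) :
    (∃ Q : Matrix (Fin n) (Fin n) ℝ, IsUnit Q ∧ ∀ i, (Qᵀ * A i * Q).IsDiag) ↔
      ∀ i j : Fin (m + 1), i ≠ Fin.last m → j ≠ Fin.last m →
        (Pᵀ * A i * P) * (Pᵀ * A j * P) = (Pᵀ * A j * P) * (Pᵀ * A i * P) := by
  have hsum : ∑ i, lam i • (Pᵀ * A i * P) = 1 := by
    simp [← hPid, Finset.mul_sum, Finset.sum_mul]
  change SimultaneouslyDiagonalizableByCongruence A ↔ _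
  rw [← SimultaneouslyDiagonalizableByCongruence.transpose_mul_mul_iff hP]
  refine ⟨fun h i j _ _ => h.commute_of_sum_smul_eq_one hsum i j, fun h => ?_⟩
  exact simultaneouslyDiagonalizableByCongruence_of_commute
    (fun i => (hA i).transpose_mul_mul P) (commute_of_sum_smul_eq_one hsum hlamm h)

theorem stmt_10 (n m : ℕ) (A : Fin (m + 1) → Matrix (Fin n) (Fin n) ℝ)
    (hA : ∀ i, (A i).IsSymm)
    (lam : Fin (m + 1) → ℝ) (hlamm : lam (Fin.last m) ≠ 0)
    (hpd : (∑ i, lam i • A i).PosDef)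
    (P : Matrix (Fin n) (Fin n) ℝ) (hP : IsUnit P)
    (hPid : Pᵀ * (∑ i, lam i • A i) * P = 1) :
    (∃ Q : Matrix (Fin n) (Fin n) ℝ, IsUnit Q ∧ ∀ i, (Qᵀ * A i * Q).IsDiag) ↔
      ∀ i j : Fin (m + 1), i ≠ Fin.last m → j ≠ Fin.last m →
        (Pᵀ * A i * P) * (Pᵀ * A j * P) = (Pᵀ * A j * P) * (Pᵀ * A i * P) :=
  stmt_10_general n m A hA lam hlamm P hP hPid
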